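/- Soundness of pv with respect to intuitionistic interpretation: if pv(𝒫, G) holds, then under any valuation v of atoms to propositions, the truth of all clauses in 𝒫 (interpreting & as conjunction, ⊃ and ⇒ as implication, ∀ and ∃ standardly) implies the truth of G. -/

import Mathlib

/-- First-order terms (de Bruijn variables). -/
inductive Tm : Type
  | var : ℕ → Tm
  | cst : ℕ → Tm
  | app : Tm → Tm → Tm

def Tm.rename (f : ℕ → ℕ) : Tm → Tm
  | .var n => .var (f n)
  | .cst c => .cst c
  | .app s t => .app (s.rename f) (t.rename f)

def Tm.subst (σ : ℕ → Tm) : Tm → Tm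
  | .var n => σ n
  | .cst c => .cst c
  | .app s t => .app (s.subst σ) (t.subst σ)

/-- Lift a substitution under a binder. -/
def liftSub (σ : ℕ → Tm) : ℕ → Tm
  | 0 => .var 0
  | n + 1 => (σ n).rename (· + 1)

mutual
/-- Goals: G ::= A | G ∧ G | D ⇒ G | ∃x G -/
inductive Goal : Type
  | atom : ℕ → Tm → Goal
  | conj : Goal → Goal → Goal
  | impl : Clause → Goal → Goal
  | ex : Goal → Goal
/-- Clauses: D ::= A | G ⊃ D | ∀x D | D & D -/
inductive Clause : Type
  | atom : ℕ → Tm → Clause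
  | himp : Goal → Clause → Clause
  | all : Clause → Clause
  | amp : Clause → Clause → Clause
end

mutual
def Goal.subst (σ : ℕ → Tm) : Goal → Goal
  | .atom p t => .atom p (t.subst σ)
  | .conj g1 g2 => .conj (g1.subst σ) (g2.subst σ)
  | .impl d g => .impl (d.subst σ) (g.subst σ)
  | .ex g => .ex (g.subst (liftSub σ))
def Clause.subst (σ : ℕ → Tm) : Clause → Clause
  | .atom p t => .atom p (t.subst σ)
  | .himp g d => .himp (g.subst σ) (d.subst σ)
  | .all d => .all (d.subst (liftSub σ))
  | .amp d1 d2 => .amp (d1.subst σ) (d2.subst σ)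
end

/-- Substitution instantiating de Bruijn index 0 with `t`. -/
def consSub (t : Tm) : ℕ → Tm
  | 0 => t
  | n + 1 => .var n

/-- [t/x]G -/
def Goal.inst (t : Tm) (g : Goal) : Goal := g.subst (consSub t)
/-- [t/x]D -/
def Clause.inst (t : Tm) (d : Clause) : Clause := d.subst (consSub t)

mutual
/-- Goal-reduction judgment pv(𝒫, G). -/
inductive pvG : Set Clause → Goal → Prop
  | atom {P : Set Clause} {p t D} : D ∈ P → pvB D P p t → pvG P (.atom p t)
  | conj {P g1 g2} : pvG P g1 → pvG P g2 → pvG P (.conj g1 g2)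
  | impl {P d g} : pvG ({d} ∪ P) g → pvG P (.impl d g)
  | ex {P g} (t : Tm) : pvG P (g.inst t) → pvG P (.ex g)
/-- Backchaining judgment pv(D; 𝒫, A) where A = atom p t. -/
inductive pvB : Clause → Set Clause → ℕ → Tm → Prop
  | atom {P p t} : pvB (.atom p t) P p t
  | himp {P g d p t} : pvG P g → pvB d P p t → pvB (.himp g d) P p t
  | all {P d p a} (t : Tm) : pvB (d.inst t) P p a → pvB (.all d) P p a
  | ampL {P d0 d1 p a} : pvB d0 P p a → pvB (.amp d0 d1) P p a
  | ampR {P d0 d1 p a} : pvB d1 P p a → pvB (.amp d0 d1) P p a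
end

/-- Environment extension at a binder: index 0 ↦ t. -/
def consEnv (t : Tm) (ρ : ℕ → Tm) : ℕ → Tm
  | 0 => t
  | n + 1 => ρ n

mutual
/-- Interpretation ⟦G⟧ of goals into Prop, with atom valuation v and
environment ρ for free variables. -/
def semG (v : ℕ → Tm → Prop) (ρ : ℕ → Tm) : Goal → Prop
  | .atom p t => v p (t.subst ρ)
  | .conj g1 g2 => semG v ρ g1 ∧ semG v ρ g2
  | .impl d g => semC v ρ d → semG v ρ g
  | .ex g => ∃ t : Tm, semG v (consEnv t ρ) g
/-- Interpretation ⟦D⟧ of clauses into Prop: & as conjunction, ⊃ as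
implication, ∀ standardly. -/
def semC (v : ℕ → Tm → Prop) (ρ : ℕ → Tm) : Clause → Prop
  | .atom p t => v p (t.subst ρ)
  | .himp g d => semG v ρ g → semC v ρ d
  | .all d => ∀ t : Tm, semC v (consEnv t ρ) d
  | .amp d0 d1 => semC v ρ d0 ∧ semC v ρ d1
end

/-!
By simultaneous induction on the two derivations. The propositional rules are sound because
⟦·⟧ reads the connectives as the corresponding ones of `Prop`. The quantifier rules rest on the
substitution lemma ⟦[t/x]G⟧ρ ↔ ⟦G⟧(ρ[x ↦ tρ]): it lets `∃`-introduction use the witness `tρ`,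
and lets backchaining through `∀x D` instantiate the semantic `∀` at `tρ`.
-/

lemma Tm.subst_rename (f : ℕ → ℕ) (τ : ℕ → Tm) (t : Tm) :
    (t.rename f).subst τ = t.subst (τ ∘ f) := by
  induction t <;> simp [Tm.rename, Tm.subst, *]

lemma Tm.subst_subst (σ τ : ℕ → Tm) (t : Tm) :
    (t.subst σ).subst τ = t.subst (fun n => (σ n).subst τ) := by
  induction t <;> simp [Tm.subst, *]

lemma liftSub_subst_consEnv (σ ρ : ℕ → Tm) (u : Tm) :
    (fun n => (liftSub σ n).subst (consEnv u ρ)) = consEnv u (fun n => (σ n).subst ρ) := by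
  funext n
  cases n with
  | zero => rfl
  | succ n => simp only [liftSub, consEnv, Tm.subst_rename]; rfl

lemma consSub_subst (t : Tm) (ρ : ℕ → Tm) :
    (fun n => (consSub t n).subst ρ) = consEnv (t.subst ρ) ρ := by
  funext n
  cases n <;> rfl

section Semantics

variable (v : ℕ → Tm → Prop)

mutual

lemma semG_subst (σ ρ : ℕ → Tm) :
    ∀ g : Goal, semG v ρ (g.subst σ) ↔ semG v (fun n => (σ n).subst ρ) g
  | .atom p t => by simp only [Goal.subst, semG, Tm.subst_subst]
  | .conj g₁ g₂ => by simp only [Goal.subst, semG, semG_subst σ ρ g₁, semG_subst σ ρ g₂]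
  | .impl d g => by simp only [Goal.subst, semG, semC_subst σ ρ d, semG_subst σ ρ g]
  | .ex g => by
    simp only [Goal.subst, semG]
    exact exists_congr fun u => by
      rw [semG_subst (liftSub σ) (consEnv u ρ) g, liftSub_subst_consEnv]

lemma semC_subst (σ ρ : ℕ → Tm) :
    ∀ d : Clause, semC v ρ (d.subst σ) ↔ semC v (fun n => (σ n).subst ρ) d
  | .atom p t => by simp only [Clause.subst, semC, Tm.subst_subst]
  | .himp g d => by simp only [Clause.subst, semC, semG_subst σ ρ g, semC_subst σ ρ d]
  | .all d => by
    simp only [Clause.subst, semC]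
    exact forall_congr' fun u => by
      rw [semC_subst (liftSub σ) (consEnv u ρ) d, liftSub_subst_consEnv]
  | .amp d₀ d₁ => by simp only [Clause.subst, semC, semC_subst σ ρ d₀, semC_subst σ ρ d₁]

end

lemma semG_inst (ρ : ℕ → Tm) (g : Goal) (t : Tm) :
    semG v ρ (g.inst t) ↔ semG v (consEnv (t.subst ρ) ρ) g := by
  rw [Goal.inst, semG_subst, consSub_subst]

lemma semC_inst (ρ : ℕ → Tm) (d : Clause) (t : Tm) :
    semC v ρ (d.inst t) ↔ semC v (consEnv (t.subst ρ) ρ) d := by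
  rw [Clause.inst, semC_subst, consSub_subst]

variable {v} {ρ : ℕ → Tm}

mutual

theorem pvG.sound {P : Set Clause} {G : Goal} :
    pvG P G → (∀ D ∈ P, semC v ρ D) → semG v ρ G
  | .atom hD hB, hP => hB.sound (hP _ hD) hP
  | .conj h₁ h₂, hP => ⟨h₁.sound hP, h₂.sound hP⟩
  | .impl h, hP => fun hd =>
    h.sound (Set.singleton_union ▸ Set.forall_mem_insert.mpr ⟨hd, hP⟩)
  | .ex (g := g) t h, hP => ⟨t.subst ρ, (semG_inst v ρ g t).mp (h.sound hP)⟩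

theorem pvB.sound {D : Clause} {P : Set Clause} {p : ℕ} {t : Tm} :
    pvB D P p t → semC v ρ D → (∀ D' ∈ P, semC v ρ D') → v p (t.subst ρ)
  | .atom, hD, _ => hD
  | .himp hG hB, hD, hP => hB.sound (hD (hG.sound hP)) hP
  | .all (d := d) u hB, hD, hP => hB.sound ((semC_inst v ρ d u).mpr (hD (u.subst ρ))) hP
  | .ampL hB, hD, hP => hB.sound hD.1 hP
  | .ampR hB, hD, hP => hB.sound hD.2 hP

end

end Semantics

/-- Soundness of pv (mutually with backchaining) with respect to the
intuitionistic interpretation. -/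
theorem pv_sound (v : ℕ → Tm → Prop) (ρ : ℕ → Tm) :
    (∀ (P : Set Clause) (G : Goal),
      pvG P G → (∀ D ∈ P, semC v ρ D) → semG v ρ G) ∧
    (∀ (D : Clause) (P : Set Clause) (p : ℕ) (t : Tm),
      pvB D P p t → semC v ρ D → (∀ D' ∈ P, semC v ρ D') → v p (t.subst ρ)) :=
  ⟨fun _ _ => pvG.sound, fun _ _ _ _ => pvB.sound⟩
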